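/- Assume GCH and the long Chang's Conjecture (ℵ_{ω+1}, ℵ_{ω+2}, …) ↠ (ℵ_1, ℵ_2, …). Then □_{ℵ_{ω+(n+1)}} fails for every n < ω. -/

import Mathlib

open Cardinal Ordinal FirstOrder

noncomputable section
namespace Paper

/-- The von Neumann ordinal corresponding to an ordinal, as a `ZFSet`. -/
noncomputable def ordZF (o : Ordinal.{0}) : ZFSet.{0} :=
  ZFSet.range fun i : o.ToType => ordZF (((Ordinal.ToType.mk (o := o)).symm i : Set.Iio o) : Ordinal)
termination_by o
decreasing_by exact ((Ordinal.ToType.mk (o := o)).symm i).2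

/-- `HSet θ` is H_θ: the collection of sets hereditarily of cardinality `< θ`. -/
def HSet (θ : Cardinal.{0}) : Set ZFSet.{0} :=
  {x | ∃ t : ZFSet, x ∈ t ∧ t.IsTransitive ∧ Cardinal.mk t.toSet < Cardinal.lift.{1} θ}

/-- The language with a single binary relation, interpreted as membership. -/
abbrev memLang : FirstOrder.Language := FirstOrder.Language.graph

instance zfSetStructure (S : Set ZFSet.{0}) : memLang.Structure S where
  funMap := fun f _ => isEmptyElim f
  RelMap := fun {n} r v =>
    match n, r with
    | 2, .adj => ((v 0 : ZFSet) ∈ (v 1 : ZFSet))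

/-- Membership of a `ZFSet` in (the carrier of) an elementary substructure of `(H_θ, ∈)`. -/
def inX {θ : Cardinal.{0}} (X : memLang.ElementarySubstructure ↥(HSet θ)) (a : ZFSet) : Prop :=
  ∃ x : ↥(HSet θ), x ∈ X ∧ (x : ZFSet) = a

/-- The trace of `X` on the ordinals: `X ∩ Ord`. -/
def ordsIn {θ : Cardinal.{0}} (X : memLang.ElementarySubstructure ↥(HSet θ)) : Set Ordinal :=
  {o | inX X (ordZF o)}

/-- `z` codes the set of ordinals `x`. -/
def codesOrdSet (z : ZFSet) (x : Set Ordinal) : Prop :=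
  ∀ w : ZFSet, w ∈ z ↔ ∃ o ∈ x, w = ordZF o

/-- The set of ordinals `x` is an element of `X` (as coded by a `ZFSet`). -/
def setInX {θ : Cardinal.{0}} (X : memLang.ElementarySubstructure ↥(HSet θ))
    (x : Set Ordinal) : Prop :=
  ∃ z : ZFSet, inX X z ∧ codesOrdSet z x

/-- The Generalized Continuum Hypothesis. -/
def GCH : Prop := ∀ c : Cardinal.{0}, ℵ₀ ≤ c → 2 ^ c = Order.succ c

/-- A Chang set: `Card(X ∩ ℵ_{ω+(n+1)}) = ℵ_{n+1}` for all `n < ω`. -/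
def ChangSet (X : Set Ordinal.{0}) : Prop :=
  ∀ n : ℕ, Cardinal.mk ↥(X ∩ Set.Iio (Cardinal.aleph (Ordinal.omega0 + (n + 1))).ord)
    = Cardinal.lift.{1} (Cardinal.aleph.{0} (n + 1))

/-- The long Chang's Conjecture `(ℵ_{ω+1},ℵ_{ω+2},…) ↠ (ℵ_1,ℵ_2,…)`: every structure
(equivalently, every finitary closure operator) on `ℵ_{ω+ω}` has a Chang substructure. -/
def LongCC : Prop :=
  ∀ F : Finset Ordinal.{0} → Ordinal.{0},
    (∀ s, F s < (Cardinal.aleph (Ordinal.omega0 + Ordinal.omega0)).ord) →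
    ∃ X : Set Ordinal, X ⊆ Set.Iio (Cardinal.aleph (Ordinal.omega0 + Ordinal.omega0)).ord ∧
      ChangSet X ∧ ∀ s : Finset Ordinal, ↑s ⊆ X → F s ∈ X

/-- The order type of a set of ordinals. -/
def otp (X : Set Ordinal.{0}) : Ordinal.{1} :=
  Ordinal.type (Subrel ((· < ·) : Ordinal.{0} → Ordinal.{0} → Prop) (· ∈ X))

/-- `C` is club in `α`. -/
def IsClubIn (C : Set Ordinal) (α : Ordinal) : Prop :=
  C ⊆ Set.Iio α ∧ (∀ β < α, ∃ γ ∈ C, β ≤ γ) ∧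
    ∀ β < α, (C ∩ Set.Iio β).Nonempty → sSup (C ∩ Set.Iio β) = β → β ∈ C

/-- `β` is a limit point of `C`. -/
def IsLimitPt (C : Set Ordinal) (β : Ordinal) : Prop :=
  (C ∩ Set.Iio β).Nonempty ∧ sSup (C ∩ Set.Iio β) = β

/-- `C` is a `□_κ`-sequence on `κ⁺ = (succ κ).ord`. -/
def IsSquareSeq (κ : Cardinal.{0}) (C : Ordinal → Set Ordinal) : Prop :=
  ∀ α < (Order.succ κ).ord, Order.IsSuccLimit α →
    IsClubIn (C α) α ∧ otp (C α) ≤ Ordinal.lift.{1} κ.ord ∧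
      ∀ β < α, IsLimitPt (C α) β → C β = C α ∩ Set.Iio β

/-- Jensen's square principle `□_κ`. -/
def Square (κ : Cardinal.{0}) : Prop := ∃ C, IsSquareSeq κ C


/-- The ordinal trace of a set of elements of `H_θ`. -/
def ordsOf {θ : Cardinal.{0}} (S : Set ↥(HSet θ)) : Set Ordinal :=
  {o | ∃ m ∈ S, (m : ZFSet) = ordZF o}

/-- `z` codes the function `g` with domain `μ`. -/
def codesFn (z : ZFSet) (μ : Ordinal.{0}) (g : Ordinal → Ordinal) : Prop :=
  ∀ w : ZFSet, w ∈ z ↔ ∃ β < μ, w = ZFSet.pair (ordZF β) (ordZF (g β))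

/-- `z` codes the indexed family `x` of sets of ordinals, with index set `γ`. -/
def codesFam (z : ZFSet) (γ : Ordinal.{0}) (x : Ordinal → Set Ordinal) : Prop :=
  ∀ w : ZFSet, w ∈ z ↔ ∃ α < γ, ∃ β ∈ x α, w = ZFSet.pair (ordZF α) (ordZF β)

section SQ
open scoped Classical

lemma min'_pair {a c : Ordinal} (h : a < c) (hne : ({a, c} : Finset Ordinal).Nonempty) :
    ({a, c} : Finset Ordinal).min' hne = a := by
  apply le_antisymm (Finset.min'_le _ a (by simp))
  apply Finset.le_min'
  intro y hy
  simp only [Finset.mem_insert, Finset.mem_singleton] at hy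
  rcases hy with rfl | rfl
  · exact le_rfl
  · exact h.le

lemma max'_pair {a c : Ordinal} (h : a < c) (hne : ({a, c} : Finset Ordinal).Nonempty) :
    ({a, c} : Finset Ordinal).max' hne = c := by
  apply le_antisymm
  · apply Finset.max'_le
    intro y hy
    simp only [Finset.mem_insert, Finset.mem_singleton] at hy
    rcases hy with rfl | rfl
    · exact h.le
    · exact le_rfl
  · exact Finset.le_max' _ c (by simp)

lemma min'_triple {a b c : Ordinal} (h1 : a < b) (h2 : b < c)
    (hne : ({a, b, c} : Finset Ordinal).Nonempty) :
    ({a, b, c} : Finset Ordinal).min' hne = a := by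
  apply le_antisymm (Finset.min'_le _ a (by simp))
  apply Finset.le_min'
  intro y hy
  simp only [Finset.mem_insert, Finset.mem_singleton] at hy
  rcases hy with rfl | rfl | rfl
  · exact le_rfl
  · exact h1.le
  · exact (h1.trans h2).le

lemma max'_triple {a b c : Ordinal} (h1 : a < b) (h2 : b < c)
    (hne : ({a, b, c} : Finset Ordinal).Nonempty) :
    ({a, b, c} : Finset Ordinal).max' hne = c := by
  apply le_antisymm
  · apply Finset.max'_le
    intro y hy
    simp only [Finset.mem_insert, Finset.mem_singleton] at hy
    rcases hy with rfl | rfl | rfl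
    · exact (h1.trans h2).le
    · exact h2.le
    · exact le_rfl
  · exact Finset.le_max' _ c (by simp)

lemma min'_quad {a b c d : Ordinal} (h1 : a < b) (h2 : b < c) (h3 : c < d)
    (hne : ({a, b, c, d} : Finset Ordinal).Nonempty) :
    ({a, b, c, d} : Finset Ordinal).min' hne = a := by
  apply le_antisymm (Finset.min'_le _ a (by simp))
  apply Finset.le_min'
  intro y hy
  simp only [Finset.mem_insert, Finset.mem_singleton] at hy
  rcases hy with rfl | rfl | rfl | rfl
  · exact le_rfl
  · exact h1.le
  · exact (h1.trans h2).le
  · exact ((h1.trans h2).trans h3).le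

lemma max'_quad {a b c d : Ordinal} (h1 : a < b) (h2 : b < c) (h3 : c < d)
    (hne : ({a, b, c, d} : Finset Ordinal).Nonempty) :
    ({a, b, c, d} : Finset Ordinal).max' hne = d := by
  apply le_antisymm
  · apply Finset.max'_le
    intro y hy
    simp only [Finset.mem_insert, Finset.mem_singleton] at hy
    rcases hy with rfl | rfl | rfl | rfl
    · exact ((h1.trans h2).trans h3).le
    · exact (h2.trans h3).le
    · exact h3.le
    · exact le_rfl
  · exact Finset.le_max' _ d (by simp)

def Ffun (CC : Ordinal → Set Ordinal.{0}) (K L Linf : Ordinal.{0})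
    (j : Ordinal → Ordinal → Ordinal) : Finset Ordinal.{0} → Ordinal.{0} := fun s =>
  if h1 : s.card = 1 then
    (if s.min' (Finset.card_pos.mp (by omega)) + 1 < Linf then
      s.min' (Finset.card_pos.mp (by omega)) + 1 else 0)
  else if h2 : s.card = 2 then
    (if s.max' (Finset.card_pos.mp (by omega)) = s.min' (Finset.card_pos.mp (by omega)) + 1 then
       (if Ordinal.pred (s.min' (Finset.card_pos.mp (by omega))) < Linf then
          Ordinal.pred (s.min' (Finset.card_pos.mp (by omega))) else 0)
     else j (s.max' (Finset.card_pos.mp (by omega))) (s.min' (Finset.card_pos.mp (by omega))))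
  else if h3 : s.card = 3 then
    (if s.min' (Finset.card_pos.mp (by omega)) + 1 ∈ s then
       (if sInf {o : Ordinal.{0} |
            Ordinal.lift.{1} o = otp (CC (s.max' (Finset.card_pos.mp (by omega))) ∩
              Set.Iio (s.min' (Finset.card_pos.mp (by omega))))} < K then
          sInf {o : Ordinal.{0} |
            Ordinal.lift.{1} o = otp (CC (s.max' (Finset.card_pos.mp (by omega))) ∩
              Set.Iio (s.min' (Finset.card_pos.mp (by omega))))}
        else 0)
     else 0)
  else if h4 : s.card = 4 then
    (if s.min' (Finset.card_pos.mp (by omega)) + 1 ∈ s ∧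
        s.min' (Finset.card_pos.mp (by omega)) + 2 ∈ s then
       (if sInf (CC (s.max' (Finset.card_pos.mp (by omega))) ∩
            Set.Ici (s.min' (Finset.card_pos.mp (by omega)))) < L then
          sInf (CC (s.max' (Finset.card_pos.mp (by omega))) ∩
            Set.Ici (s.min' (Finset.card_pos.mp (by omega))))
        else 0)
     else 0)
  else 0

lemma Ffun_lt {CC K L Linf j} (hK : K < Linf) (hL : L < Linf) (h0 : 0 < Linf)
    (hj : ∀ c a, j c a < K) : ∀ s, Ffun CC K L Linf j s < Linf := by
  intro s
  unfold Ffun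
  split_ifs <;> first
    | assumption
    | exact h0
    | exact lt_trans (hj _ _) hK
    | { exact lt_trans (by assumption) hK }
    | { exact lt_trans (by assumption) hL }

lemma Ffun_singleton {CC K L Linf j} (x : Ordinal) :
    Ffun CC K L Linf j {x} = if x + 1 < Linf then x + 1 else 0 := by
  unfold Ffun
  rw [dif_pos (Finset.card_singleton x)]
  simp

lemma card_pair' {a c : Ordinal} (h : a ≠ c) : ({a, c} : Finset Ordinal).card = 2 :=
  Finset.card_pair h

lemma Ffun_pair_adj {CC K L Linf j} (a : Ordinal) :
    Ffun CC K L Linf j {a, a + 1} =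
      if Ordinal.pred a < Linf then Ordinal.pred a else 0 := by
  have hlt : a < a + 1 := by rw [Ordinal.add_one_eq_succ]; exact Order.lt_succ a
  have hcard : ({a, a + 1} : Finset Ordinal).card = 2 := card_pair' hlt.ne
  unfold Ffun
  rw [dif_neg (by omega), dif_pos hcard]
  have hne : ({a, a + 1} : Finset Ordinal).Nonempty := Finset.card_pos.mp (by omega)
  rw [min'_pair hlt _, max'_pair hlt _, if_pos rfl]

lemma Ffun_pair {CC K L Linf j} {a c : Ordinal} (h : a < c) (hne2 : c ≠ a + 1) :
    Ffun CC K L Linf j {a, c} = j c a := by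
  have hcard : ({a, c} : Finset Ordinal).card = 2 := card_pair' h.ne
  unfold Ffun
  rw [dif_neg (by omega), dif_pos hcard]
  rw [min'_pair h _, max'_pair h _, if_neg hne2]

lemma Ffun_triple {CC K L Linf j} {a c : Ordinal} (h : a + 1 < c) :
    Ffun CC K L Linf j {a, a + 1, c} =
      (if sInf {o : Ordinal.{0} | Ordinal.lift.{1} o = otp (CC c ∩ Set.Iio a)} < K then
         sInf {o : Ordinal.{0} | Ordinal.lift.{1} o = otp (CC c ∩ Set.Iio a)}
       else 0) := by
  have h1 : a < a + 1 := by rw [Ordinal.add_one_eq_succ]; exact Order.lt_succ a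
  have hcard : ({a, a + 1, c} : Finset Ordinal).card = 3 := by
    rw [Finset.card_insert_of_notMem (by
        simp only [Finset.mem_insert, Finset.mem_singleton]
        push_neg
        exact ⟨h1.ne, (h1.trans h).ne⟩),
      Finset.card_insert_of_notMem (by
        simp only [Finset.mem_singleton]
        exact h.ne), Finset.card_singleton]
  unfold Ffun
  rw [dif_neg (by omega), dif_neg (by omega), dif_pos hcard]
  have hne : ({a, a + 1, c} : Finset Ordinal).Nonempty := Finset.card_pos.mp (by omega)
  rw [min'_triple h1 h _, max'_triple h1 h _, if_pos (by
    simp only [Finset.mem_insert, Finset.mem_singleton]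
    tauto)]

lemma Ffun_quad {CC K L Linf j} {a c : Ordinal} (h : a + 2 < c) :
    Ffun CC K L Linf j {a, a + 1, a + 2, c} =
      (if sInf (CC c ∩ Set.Ici a) < L then sInf (CC c ∩ Set.Ici a) else 0) := by
  have h1 : a < a + 1 := by rw [Ordinal.add_one_eq_succ]; exact Order.lt_succ a
  have h12 : (a + 1) + 1 = a + 2 := by rw [add_assoc]; norm_num
  have h2 : a + 1 < a + 2 := by
    rw [← h12, Ordinal.add_one_eq_succ (a+1)]; exact Order.lt_succ (a + 1)
  have hcard : ({a, a + 1, a + 2, c} : Finset Ordinal).card = 4 := by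
    rw [Finset.card_insert_of_notMem (by
        simp only [Finset.mem_insert, Finset.mem_singleton]
        push_neg
        exact ⟨h1.ne, (h1.trans h2).ne, ((h1.trans h2).trans h).ne⟩),
      Finset.card_insert_of_notMem (by
        simp only [Finset.mem_insert, Finset.mem_singleton]
        push_neg
        exact ⟨h2.ne, (h2.trans h).ne⟩),
      Finset.card_insert_of_notMem (by
        simp only [Finset.mem_singleton]
        exact h.ne), Finset.card_singleton]
  unfold Ffun
  rw [dif_neg (by omega), dif_neg (by omega), dif_neg (by omega), dif_pos hcard]
  have hne : ({a, a + 1, a + 2, c} : Finset Ordinal).Nonempty := Finset.card_pos.mp (by omega)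
  rw [min'_quad h1 h2 h _, max'_quad h1 h2 h _, if_pos (by
    constructor
    · simp only [Finset.mem_insert, Finset.mem_singleton]
      tauto
    · simp only [Finset.mem_insert, Finset.mem_singleton]
      tauto)]


lemma otp_mono {D D' : Set Ordinal} (h : D ⊆ D') : otp D ≤ otp D' := by
  refine RelEmbedding.ordinal_type_le (r := Subrel ((· < ·) : Ordinal.{0} → Ordinal.{0} → Prop) (· ∈ D))
    (s := Subrel ((· < ·) : Ordinal.{0} → Ordinal.{0} → Prop) (· ∈ D')) ⟨⟨Set.inclusion h, Set.inclusion_injective h⟩, Iff.rfl⟩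

lemma otp_Iio_lt {D : Set Ordinal} {e : Ordinal} (he : e ∈ D) :
    otp (D ∩ Set.Iio e) < otp D := by
  refine PrincipalSeg.ordinal_type_lt
    (⟨⟨⟨fun x => ⟨x.1, x.2.1⟩, ?_⟩, Iff.rfl⟩, ⟨e, he⟩, ?_⟩ :
      PrincipalSeg (Subrel ((· < ·) : Ordinal → Ordinal → Prop) (· ∈ D ∩ Set.Iio e))
      (Subrel ((· < ·) : Ordinal → Ordinal → Prop) (· ∈ D)))
  · intro a b hab
    cases a; cases b
    simpa [Subtype.mk.injEq] using hab
  · intro b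
    constructor
    · rintro ⟨a, rfl⟩
      exact a.2.2
    · intro hb
      exact ⟨⟨b.1, b.2, hb⟩, rfl⟩

lemma otp_cut_lt {D : Set Ordinal} {t e : Ordinal} (he : e ∈ D) (hte : t ≤ e) :
    otp (D ∩ Set.Iio t) < otp D := by
  have hne : (D ∩ Set.Ici t).Nonempty := ⟨e, he, hte⟩
  set e' := sInf (D ∩ Set.Ici t) with he'
  have he'm : e' ∈ D ∩ Set.Ici t := csInf_mem hne
  have hset : D ∩ Set.Iio t = D ∩ Set.Iio e' := by
    ext d
    constructor
    · rintro ⟨hd, hdt⟩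
      exact ⟨hd, Set.mem_Iio.mpr (lt_of_lt_of_le (Set.mem_Iio.mp hdt) (Set.mem_Ici.mp he'm.2))⟩
    · rintro ⟨hd, hde⟩
      refine ⟨hd, ?_⟩
      by_contra hd2
      exact absurd (csInf_le (OrderBot.bddBelow _)
        (show d ∈ D ∩ Set.Ici t from ⟨hd, Set.mem_Ici.mpr (not_lt.mp hd2)⟩)) (not_le.mpr hde)
  rw [hset]
  exact otp_Iio_lt he'm.1

theorem main
    (C : Ordinal → Set Ordinal.{0}) (X : Set Ordinal.{0}) (K L : Ordinal.{0})
    (μ ν ρ : Cardinal.{1})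
    (hμ : ℵ₀ ≤ μ) (hμν : μ < ν)
    (hLlim : Order.IsSuccLimit L)
    (hsq : ∀ α < L, Order.IsSuccLimit α →
      IsClubIn (C α) α ∧ otp (C α) ≤ Ordinal.lift.{1} K ∧
        ∀ β < α, IsLimitPt (C α) β → C β = C α ∩ Set.Iio β)
    (hS : #(X ∩ Set.Iio L : Set Ordinal) = ν)
    (hsucc : ∀ x ∈ X, x + 1 ∈ X)
    (hpred : ∀ γ ∈ X, Ordinal.pred γ ∈ X)
    (hbound : ∀ β ∈ X, β < L → #(X ∩ Set.Iio β : Set Ordinal) ≤ μ)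
    (hZ : #(X ∩ Set.Iio K : Set Ordinal) ≤ μ)
    (hu : ∀ γ ∈ X, γ < L → Order.IsSuccLimit γ → ∀ ξ ∈ X, ξ < γ → sInf (C γ ∩ Set.Ici ξ) ∈ X)
    (hm : ∀ γ ∈ X, γ < L → Order.IsSuccLimit γ → ∀ ξ ∈ X, ξ < γ →
       otp (C γ ∩ Set.Iio ξ) < Ordinal.lift.{1} K →
       ∃ z ∈ X, z < K ∧ Ordinal.lift.{1} z = otp (C γ ∩ Set.Iio ξ))
    (hxρ : ∀ x < L, #(Set.Iio x : Set Ordinal) ≤ ρ)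
    (hLρ : ν * ρ < #(Set.Iio L : Set Ordinal)) :
    False := by
  classical
  set S : Set Ordinal := X ∩ Set.Iio L with hSdef
  have hSbdd : BddAbove S := ⟨L, fun x hx => hx.2.le⟩
  have hν0 : ν ≠ 0 := ne_of_gt (lt_of_lt_of_le Cardinal.aleph0_pos hμ |>.trans hμν)
  have hSn : S.Nonempty := by
    rcases Set.eq_empty_or_nonempty S with h | h
    · rw [h, Cardinal.mk_emptyCollection] at hS
      exact absurd hS.symm hν0
    · exact h
  set δ := sSup S with hδdef
  have hmemS : ∀ x ∈ S, x + 1 ∈ S := by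
    intro x hx
    refine ⟨hsucc x hx.1, ?_⟩
    rw [Ordinal.add_one_eq_succ]
    exact hLlim.succ_lt hx.2
  have hxδ : ∀ x ∈ S, x < δ := by
    intro x hx
    have h1 : x < x + 1 := by rw [Ordinal.add_one_eq_succ]; exact Order.lt_succ x
    exact lt_of_lt_of_le h1 (le_csSup hSbdd (hmemS x hx))
  have hδL' : δ ≤ L := csSup_le hSn fun x hx => hx.2.le
  have hδexists : ∀ a < δ, ∃ x ∈ S, a < x := fun a ha => exists_lt_of_lt_csSup hSn ha
  have hδL : δ < L := by
    rcases lt_or_eq_of_le hδL' with h | h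
    · exact h
    · exfalso
      have hcover : Set.Iio L ⊆ ⋃ x : ↥S, Set.Iio x.1 := by
        intro y hy
        obtain ⟨x, hxS, hyx⟩ := hδexists y (h ▸ hy)
        exact Set.mem_iUnion.mpr ⟨⟨x, hxS⟩, hyx⟩
      have h1 : #(Set.Iio L : Set Ordinal) ≤ #↥S * ⨆ x : ↥S, #(Set.Iio x.1 : Set Ordinal) :=
        (Cardinal.mk_le_mk_of_subset hcover).trans (Cardinal.mk_iUnion_le _)
      have h2 : ⨆ x : ↥S, #(Set.Iio x.1 : Set Ordinal) ≤ ρ :=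
        ciSup_le' fun x => hxρ _ x.2.2
      exact absurd (h1.trans (mul_le_mul' hS.le h2)) (not_le.mpr hLρ)
  have hδlim : Order.IsSuccLimit δ := by
    rw [Ordinal.isSuccLimit_iff, Order.isSuccPrelimit_iff_succ_lt]
    constructor
    · intro h0
      obtain ⟨x, hx⟩ := hSn
      exact absurd (h0 ▸ hxδ x hx) (not_lt_of_ge (show (0 : Ordinal) ≤ x from zero_le))
    · intro a ha
      obtain ⟨x, hxS, hax⟩ := hδexists a ha
      exact lt_of_le_of_lt (Order.succ_le_of_lt hax) (hxδ x hxS)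
  obtain ⟨hEclub, hEotp, hEcoh⟩ := hsq δ hδL hδlim
  set E := C δ with hEdef
  obtain ⟨hEsub, hEunb, _⟩ := hEclub
  set P : Ordinal → Prop := fun β =>
    β < δ ∧ IsLimitPt E β ∧ (X ∩ Set.Iio β).Nonempty ∧ sSup (X ∩ Set.Iio β) = β with hPdef
  -- step
  have hstep : ∀ a < δ, ∃ x e : Ordinal, x ∈ S ∧ e ∈ E ∧ a < e ∧ e < x := by
    intro a ha
    have ha1 : a + 1 < δ := by rw [Ordinal.add_one_eq_succ]; exact hδlim.succ_lt ha
    obtain ⟨e, heE, hae⟩ := hEunb (a + 1) ha1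
    obtain ⟨x, hxS, hex⟩ := hδexists e (hEsub heE)
    refine ⟨x, e, hxS, heE, ?_, hex⟩
    have : a < a + 1 := by rw [Ordinal.add_one_eq_succ]; exact Order.lt_succ a
    exact lt_of_lt_of_le this hae
  -- B1
  have hB1 : ∀ a < δ, ∃ β, a < β ∧ P β := by
    intro a ha
    have hch : ∀ b : Ordinal, ∃ x e : Ordinal, b < δ → x ∈ S ∧ e ∈ E ∧ b < e ∧ e < x := by
      intro b
      by_cases hb : b < δ
      · obtain ⟨x, e, h⟩ := hstep b hb
        exact ⟨x, e, fun _ => h⟩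
      · exact ⟨0, 0, fun h => absurd h hb⟩
    choose xf ef hf using hch
    set g : ℕ → Ordinal := fun k => Nat.rec (xf a) (fun _ ih => xf ih) k with hg
    have hQ : ∀ k, g k ∈ S := by
      intro k
      induction k with
      | zero => exact (hf a ha).1
      | succ k ih => exact (hf (g k) (hxδ _ ih)).1
    have hfk : ∀ k, g k ∈ S ∧ ef (g k) ∈ E ∧ g k < ef (g k) ∧ ef (g k) < g (k + 1) :=
      fun k => ⟨hQ k, (hf (g k) (hxδ _ (hQ k))).2.1, (hf (g k) (hxδ _ (hQ k))).2.2.1,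
        (hf (g k) (hxδ _ (hQ k))).2.2.2⟩
    have hginc : ∀ k, g k < g (k + 1) := fun k => lt_trans (hfk k).2.2.1 (hfk k).2.2.2
    set β := sSup (Set.range g) with hβdef
    have hrngbdd : BddAbove (Set.range g) := by
      refine ⟨δ, ?_⟩
      rintro _ ⟨k, rfl⟩
      exact (hxδ _ (hQ k)).le
    have hrn : (Set.range g).Nonempty := ⟨g 0, 0, rfl⟩
    have hgleβ : ∀ k, g k ≤ β := fun k => le_csSup hrngbdd ⟨k, rfl⟩
    have hgltβ : ∀ k, g k < β := fun k => lt_of_lt_of_le (hginc k) (hgleβ (k + 1))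
    have hβδ' : β ≤ δ := by
      apply csSup_le hrn
      rintro _ ⟨k, rfl⟩
      exact (hxδ _ (hQ k)).le
    have hβδ : β < δ := by
      rcases lt_or_eq_of_le hβδ' with h | h
      · exact h
      · exfalso
        have hcov : S ⊆ ⋃ k : ULift.{1} ℕ, (X ∩ Set.Iio (g k.down)) := by
          intro y hy
          obtain ⟨w, ⟨k, rfl⟩, hyw⟩ := exists_lt_of_lt_csSup hrn (h ▸ hxδ y hy)
          exact Set.mem_iUnion.mpr ⟨⟨k⟩, hy.1, hyw⟩
        have h1 : ν ≤ #(ULift.{1} ℕ) * ⨆ k : ULift.{1} ℕ, #(X ∩ Set.Iio (g k.down) : Set Ordinal) :=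
          hS ▸ (Cardinal.mk_le_mk_of_subset hcov).trans (Cardinal.mk_iUnion_le _)
        have h2 : ⨆ k : ULift.{1} ℕ, #(X ∩ Set.Iio (g k.down) : Set Ordinal) ≤ μ :=
          ciSup_le' fun k => hbound (g k.down) (hQ k.down).1 (hQ k.down).2
        have h3 : #(ULift.{1} ℕ) = ℵ₀ := by simp
        have h4 : ν ≤ ℵ₀ * μ := by
          calc ν ≤ #(ULift.{1} ℕ) * ⨆ k : ULift.{1} ℕ, #(X ∩ Set.Iio (g k.down) : Set Ordinal) := h1
            _ ≤ #(ULift.{1} ℕ) * μ := mul_le_mul' le_rfl h2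
            _ = ℵ₀ * μ := by rw [h3]
        rw [Cardinal.mul_eq_max le_rfl hμ, max_eq_right hμ] at h4
        exact absurd h4 (not_le.mpr hμν)
    have hbddEβ : BddAbove (E ∩ Set.Iio β) := ⟨β, fun t ht => ht.2.le⟩
    have hbddXβ : BddAbove (X ∩ Set.Iio β) := ⟨β, fun t ht => ht.2.le⟩
    have heEβ : ∀ k, ef (g k) ∈ E ∩ Set.Iio β :=
      fun k => ⟨(hfk k).2.1, lt_of_lt_of_le (hfk k).2.2.2 (hgleβ (k + 1))⟩
    have hgXβ : ∀ k, g k ∈ X ∩ Set.Iio β := fun k => ⟨(hQ k).1, hgltβ k⟩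
    refine ⟨β, lt_trans (lt_trans (hf a ha).2.2.1 (hf a ha).2.2.2) (hgltβ 0), hβδ, ⟨⟨ef (g 0), heEβ 0⟩, ?_⟩, ⟨g 0, hgXβ 0⟩, ?_⟩
    · apply le_antisymm
      · exact csSup_le ⟨ef (g 0), heEβ 0⟩ fun t ht => ht.2.le
      · rw [hβdef]
        apply csSup_le hrn
        rintro _ ⟨k, rfl⟩
        exact le_trans (hfk k).2.2.1.le (le_csSup hbddEβ (heEβ k))
    · apply le_antisymm
      · exact csSup_le ⟨g 0, hgXβ 0⟩ fun t ht => ht.2.le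
      · rw [hβdef]
        apply csSup_le hrn
        rintro _ ⟨k, rfl⟩
        exact le_csSup hbddXβ (hgXβ k)
  -- P implies limit
  have hPlim : ∀ β, P β → Order.IsSuccLimit β := by
    intro β hP
    obtain ⟨hβδ, hLP, hXne, hXsup⟩ := hP
    rw [Ordinal.isSuccLimit_iff, Order.isSuccPrelimit_iff_succ_lt]
    constructor
    · intro h0
      obtain ⟨x, hx⟩ := hXne
      exact absurd (show x < 0 by rw [← h0]; exact hx.2) (not_lt_of_ge (show (0 : Ordinal) ≤ x from zero_le))
    · intro a ha
      obtain ⟨x, hxm, hax⟩ := exists_lt_of_lt_csSup hXne (by rw [hXsup]; exact ha)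
      exact lt_of_le_of_lt (Order.succ_le_of_lt hax) hxm.2
  -- B2
  have hB2 : ∀ β β', P β' → β < β' →
      ∃ z ∈ X, z < K ∧ otp (E ∩ Set.Iio β) < Ordinal.lift.{1} z ∧
        Ordinal.lift.{1} z ≤ otp (E ∩ Set.Iio β') := by
    intro β β' hP' hββ'
    obtain ⟨hβ'δ, ⟨hEne', hEsup'⟩, hXne', hXsup'⟩ := hP'
    obtain ⟨e, heB, hβe⟩ := exists_lt_of_lt_csSup hEne' (by rw [hEsup']; exact hββ')
    obtain ⟨ξ, hξB, heξ⟩ := exists_lt_of_lt_csSup hXne'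
      (by rw [hXsup']; exact heB.2)
    have hx' := hδexists β' hβ'δ
    set G : Set Ordinal := X ∩ Set.Iio L ∩ Set.Ici β' with hGdef
    have hGne : G.Nonempty := by
      obtain ⟨x, hxS, hx⟩ := hx'
      exact ⟨x, ⟨hxS.1, hxS.2⟩, hx.le⟩
    set γ' := sInf G with hγ'def
    have hγ'G : γ' ∈ G := csInf_mem hGne
    have hγ'X : γ' ∈ X := hγ'G.1.1
    have hγ'L : γ' < L := hγ'G.1.2
    have hβ'γ' : β' ≤ γ' := hγ'G.2
    have hnoX : ∀ y ∈ X, y < γ' → y < β' := by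
      intro y hy hyγ
      by_contra h
      have hyG : y ∈ G := ⟨⟨hy, hyγ.trans hγ'L⟩, not_lt.mp h⟩
      exact absurd (csInf_le (OrderBot.bddBelow _) hyG) (not_le.mpr hyγ)
    have hβ'lim : Order.IsSuccLimit β' := hPlim β' ⟨hβ'δ, ⟨hEne', hEsup'⟩, hXne', hXsup'⟩
    have hγ'lim : Order.IsSuccLimit γ' := by
      rcases eq_or_lt_of_le hβ'γ' with heq | hlt
      · exact heq ▸ hβ'lim
      · rw [Ordinal.isSuccLimit_iff, Order.isSuccPrelimit_iff_succ_lt]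
        constructor
        · intro h0
          exact absurd (h0 ▸ hlt) (not_lt_of_ge (show (0 : Ordinal) ≤ β' from zero_le))
        · intro c hc
          rcases lt_or_eq_of_le (Order.succ_le_of_lt hc) with h | h
          · exact h
          · exfalso
            have hcX : c ∈ X := by
              have := hpred γ' hγ'X
              rwa [← h, Ordinal.pred_succ] at this
            have hcβ' : c < β' := hnoX c hcX hc
            have : γ' ≤ β' := h ▸ Order.succ_le_of_lt hcβ'
            exact absurd this (not_le.mpr hlt)
    obtain ⟨hCclub, hCotp, hCcoh⟩ := hsq γ' hγ'L hγ'lim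
    obtain ⟨hCsub, hCunb, _⟩ := hCclub
    have hkey : C γ' ∩ Set.Iio β' = E ∩ Set.Iio β' := by
      rcases eq_or_lt_of_le hβ'γ' with heq | hlt
      · have h1 : C β' = E ∩ Set.Iio β' := hEcoh β' hβ'δ ⟨hEne', hEsup'⟩
        rw [← heq, h1, Set.inter_assoc, Set.inter_self]
      · have huu : ∀ ζ ∈ X, ζ < β' → ∃ u, u ∈ C γ' ∧ u ∈ X ∧ ζ ≤ u ∧ u < β' := by
          intro ζ hζX hζβ
          have hζγ : ζ < γ' := hζβ.trans hlt
          obtain ⟨c, hcC, hζc⟩ := hCunb ζ hζγ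
          have humem : sInf (C γ' ∩ Set.Ici ζ) ∈ C γ' ∩ Set.Ici ζ := csInf_mem ⟨c, hcC, hζc⟩
          have huc : sInf (C γ' ∩ Set.Ici ζ) ≤ c :=
            csInf_le (OrderBot.bddBelow _) (show c ∈ C γ' ∩ Set.Ici ζ from ⟨hcC, hζc⟩)
          have huγ : sInf (C γ' ∩ Set.Ici ζ) < γ' := lt_of_le_of_lt huc (hCsub hcC)
          have huX : sInf (C γ' ∩ Set.Ici ζ) ∈ X := hu γ' hγ'X hγ'L hγ'lim ζ hζX hζγ
          exact ⟨_, humem.1, huX, humem.2, hnoX _ huX huγ⟩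
        have hlpt : IsLimitPt (C γ') β' := by
          obtain ⟨ζ₀, hζ₀⟩ := id hXne'
          obtain ⟨u₀, hu₀C, _, _, hu₀β⟩ := huu ζ₀ hζ₀.1 hζ₀.2
          have hbddC : BddAbove (C γ' ∩ Set.Iio β') := ⟨β', fun t ht => ht.2.le⟩
          constructor
          · exact ⟨u₀, hu₀C, hu₀β⟩
          · apply le_antisymm
            · exact csSup_le ⟨u₀, hu₀C, hu₀β⟩ fun t ht => ht.2.le
            · conv_lhs => rw [← hXsup']
              apply csSup_le hXne'
              intro ζ hζ
              obtain ⟨u, huC, _, hζu, huβ⟩ := huu ζ hζ.1 hζ.2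
              exact le_trans hζu (le_csSup hbddC ⟨huC, huβ⟩)
        have h1 : C β' = C γ' ∩ Set.Iio β' := hCcoh β' hlt hlpt
        have h2 : C β' = E ∩ Set.Iio β' := hEcoh β' hβ'δ ⟨hEne', hEsup'⟩
        rw [← h1, h2]
    have hξβ' : ξ < β' := hξB.2
    have hξγ' : ξ < γ' := lt_of_lt_of_le hξβ' hβ'γ'
    have hkeyξ : C γ' ∩ Set.Iio ξ = E ∩ Set.Iio ξ := by
      calc C γ' ∩ Set.Iio ξ = (C γ' ∩ Set.Iio β') ∩ Set.Iio ξ := by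
            rw [Set.inter_assoc, Set.Iio_inter_Iio, min_eq_right hξβ'.le]
        _ = (E ∩ Set.Iio β') ∩ Set.Iio ξ := by rw [hkey]
        _ = E ∩ Set.Iio ξ := by rw [Set.inter_assoc, Set.Iio_inter_Iio, min_eq_right hξβ'.le]
    have hmguard : otp (C γ' ∩ Set.Iio ξ) < Ordinal.lift.{1} K := by
      obtain ⟨c, hcC, hξc⟩ := hCunb ξ hξγ'
      exact lt_of_lt_of_le (otp_cut_lt hcC hξc) hCotp
    obtain ⟨z, hzX, hzK, hzlift⟩ := hm γ' hγ'X hγ'L hγ'lim ξ hξB.1 hξγ' hmguard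
    refine ⟨z, hzX, hzK, ?_, ?_⟩
    · rw [hzlift, hkeyξ]
      have hset : E ∩ Set.Iio β = (E ∩ Set.Iio ξ) ∩ Set.Iio β := by
        rw [Set.inter_assoc, Set.Iio_inter_Iio, min_eq_right (hβe.trans heξ).le]
      rw [hset]
      exact otp_cut_lt (show e ∈ E ∩ Set.Iio ξ from ⟨heB.1, heξ⟩) hβe.le
    · rw [hzlift, hkeyξ]
      exact otp_mono fun t ht => ⟨ht.1, ht.2.trans hξβ'⟩
  -- final assembly
  have hbP : ∀ x : ↥S, ∃ β, x.1 < β ∧ P β := fun x => hB1 x.1 (hxδ x.1 x.2)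
  choose b hbx hbPP using hbP
  set T : Set Ordinal := Set.range b with hTdef
  have hTP : ∀ t : ↥T, P t.1 := by
    rintro ⟨_, x, rfl⟩
    exact hbPP x
  set Ψ : Ordinal → Ordinal := fun β =>
    sInf {z | z ∈ X ∧ z < K ∧ otp (E ∩ Set.Iio β) < Ordinal.lift.{1} z} with hΨdef
  have hΨmem : ∀ β, P β →
      Ψ β ∈ {z | z ∈ X ∧ z < K ∧ otp (E ∩ Set.Iio β) < Ordinal.lift.{1} z} := by
    intro β hPβ
    apply csInf_mem
    obtain ⟨x', hx'S, hβx'⟩ := hδexists β hPβ.1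
    obtain ⟨z, hzX, hzK, hz1, _⟩ := hB2 β (b ⟨x', hx'S⟩) (hbPP ⟨x', hx'S⟩)
      (hβx'.trans (hbx ⟨x', hx'S⟩))
    exact ⟨z, hzX, hzK, hz1⟩
  have hΨmono : ∀ β₁ β₂, P β₂ → β₁ < β₂ → Ψ β₁ < Ψ β₂ := by
    intro β₁ β₂ hP2 h12
    obtain ⟨z, hzX, hzK, hz1, hz2⟩ := hB2 β₁ β₂ hP2 h12
    have hle : Ψ β₁ ≤ z := csInf_le (OrderBot.bddBelow _) ⟨hzX, hzK, hz1⟩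
    have hmem2 := hΨmem β₂ hP2
    have hlt : z < Ψ β₂ := by
      rw [← Ordinal.lift_lt.{1}]
      exact lt_of_le_of_lt hz2 hmem2.2.2
    exact lt_of_le_of_lt hle hlt
  have hTZ : #↥T ≤ μ := by
    have hinj : Function.Injective
        (fun t : ↥T => (⟨Ψ t.1, (hΨmem t.1 (hTP t)).1, (hΨmem t.1 (hTP t)).2.1⟩ :
          ↥(X ∩ Set.Iio K))) := by
      intro t t' htt
      have hv : Ψ t.1 = Ψ t'.1 := congrArg Subtype.val htt
      rcases lt_trichotomy t.1 t'.1 with h | h | h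
      · exact absurd hv (ne_of_lt (hΨmono t.1 t'.1 (hTP t') h))
      · exact Subtype.ext h
      · exact absurd hv.symm (ne_of_lt (hΨmono t'.1 t.1 (hTP t) h))
    exact (Cardinal.mk_le_of_injective hinj).trans hZ
  have hcov2 : S ⊆ ⋃ t : ↥T, (X ∩ Set.Iio t.1) := by
    intro x hx
    exact Set.mem_iUnion.mpr ⟨⟨b ⟨x, hx⟩, ⟨x, hx⟩, rfl⟩, hx.1, hbx ⟨x, hx⟩⟩
  have h1 : ν ≤ #↥T * ⨆ t : ↥T, #(X ∩ Set.Iio t.1 : Set Ordinal) :=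
    hS ▸ (Cardinal.mk_le_mk_of_subset hcov2).trans (Cardinal.mk_iUnion_le _)
  have h2 : ⨆ t : ↥T, #(X ∩ Set.Iio t.1 : Set Ordinal) ≤ μ := by
    apply ciSup_le'
    intro t
    obtain ⟨x', hx'S, hβx'⟩ := hδexists t.1 (hTP t).1
    have hsub : X ∩ Set.Iio t.1 ⊆ X ∩ Set.Iio x' := by
      intro y hy
      exact ⟨hy.1, hy.2.trans hβx'⟩
    exact (Cardinal.mk_le_mk_of_subset hsub).trans (hbound x' hx'S.1 hx'S.2)
  have h3 : ν ≤ μ := by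
    calc ν ≤ #↥T * ⨆ t : ↥T, #(X ∩ Set.Iio t.1 : Set Ordinal) := h1
      _ ≤ μ * μ := mul_le_mul' hTZ h2
      _ = μ := Cardinal.mul_eq_self hμ
  exact absurd h3 (not_le.mpr hμν)


end SQ

/-- GCH together with the long Chang's Conjecture implies that
`□_{ℵ_{ω+(n+1)}}` fails for every `n < ω`. -/
theorem stmt6 (hGCH : GCH) (hCC : LongCC) :
    ∀ n : ℕ, ¬ Square (Cardinal.aleph.{0} (Ordinal.omega0 + (n + 1))) := by
  intro n hSquare
  obtain ⟨C, hC⟩ := hSquare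
  have hC' : ∀ α < (Order.succ (Cardinal.aleph.{0} (Ordinal.omega0 + (n + 1)))).ord,
      Order.IsSuccLimit α →
      IsClubIn (C α) α ∧
        otp (C α) ≤ Ordinal.lift.{1} (Cardinal.aleph.{0} (Ordinal.omega0 + (n + 1))).ord ∧
        ∀ β < α, IsLimitPt (C α) β → C β = C α ∩ Set.Iio β := hC
  set κc : Cardinal.{0} := Cardinal.aleph.{0} (Ordinal.omega0 + (n + 1)) with hκc
  set K : Ordinal.{0} := κc.ord with hKdef
  set L : Ordinal.{0} := (Order.succ κc).ord with hLdef
  set Linf : Ordinal.{0} := (Cardinal.aleph.{0} (Ordinal.omega0 + Ordinal.omega0)).ord with hLinfdef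
  have hlto : ∀ a : Ordinal.{0}, a < a + 1 := by
    intro a
    rw [Ordinal.add_one_eq_succ]
    exact Order.lt_succ a
  have hnlt : (Ordinal.omega0 + ((n : Ordinal.{0}) + 1)) + 1 < Ordinal.omega0 + Ordinal.omega0 := by
    rw [add_assoc]
    have h2 : ((n : Ordinal.{0}) + 1) + 1 = ((n + 2 : ℕ) : Ordinal.{0}) := by
      push_cast
      rw [add_assoc]
      norm_num
    rw [h2]
    exact (add_lt_add_iff_left _).2 (Ordinal.nat_lt_omega0 _)
  have hsucceq : Order.succ κc = Cardinal.aleph.{0} ((Ordinal.omega0 + ((n : Ordinal.{0}) + 1)) + 1) := by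
    rw [hκc, ← Cardinal.aleph_succ]
    exact congrArg _ (Ordinal.add_one_eq_succ _).symm
  have hKLinf : K < Linf := by
    rw [hKdef, hLinfdef, hκc]
    apply Cardinal.ord_lt_ord.mpr
    apply Cardinal.aleph_lt_aleph.mpr
    exact lt_trans (hlto _) hnlt
  have hLLinf : L < Linf := by
    rw [hLdef, hLinfdef, hsucceq]
    exact Cardinal.ord_lt_ord.mpr (Cardinal.aleph_lt_aleph.mpr hnlt)
  have hLinfLim : Order.IsSuccLimit Linf := Cardinal.isSuccLimit_ord (Cardinal.aleph0_le_aleph _)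
  have hLlim : Order.IsSuccLimit L :=
    Cardinal.isSuccLimit_ord ((Cardinal.aleph0_le_aleph _).trans (Order.le_succ _))
  have hKpos : 0 < K := (Cardinal.isSuccLimit_ord (Cardinal.aleph0_le_aleph _)).pos
  -- the injections
  have hjex : ∀ c : Ordinal.{0}, ∃ f : Ordinal.{0} → Ordinal.{0},
      (∀ a, f a < K) ∧ (c < L → Set.InjOn f (Set.Iio c)) := by
    intro c
    by_cases hc : c < L
    · have h1 : #(Set.Iio c : Set Ordinal) ≤ #(Set.Iio K : Set Ordinal) := by
        rw [Ordinal.mk_Iio_ordinal, Ordinal.mk_Iio_ordinal]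
        apply Cardinal.lift_le.mpr
        rw [hKdef, Cardinal.card_ord]
        exact Order.lt_succ_iff.mp (Cardinal.lt_ord.mp (hLdef ▸ hc))
      obtain ⟨emb⟩ := (Cardinal.le_def _ _).mp h1
      refine ⟨fun a => if h : a < c then (emb ⟨a, h⟩).1 else 0, ?_, ?_⟩
      · intro a
        dsimp only
        by_cases h : a < c
        · rw [dif_pos h]; exact (emb ⟨a, h⟩).2
        · rw [dif_neg h]; exact hKpos
      · intro _ a ha b hb hab
        rw [Set.mem_Iio] at ha hb
        dsimp only at hab
        rw [dif_pos ha, dif_pos hb] at hab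
        exact congrArg Subtype.val (emb.injective (Subtype.ext hab))
    · exact ⟨fun _ => 0, fun _ => hKpos, fun h => absurd h hc⟩
  choose j hj1 hj2 using hjex
  have hFlt : ∀ s, Ffun C K L Linf j s < Linf :=
    Ffun_lt hKLinf hLLinf hLinfLim.pos fun c a => hj1 c a
  obtain ⟨X, hXsub, hChang, hCl⟩ := hCC (Ffun C K L Linf j) hFlt
  have hXlt : ∀ x ∈ X, x < Linf := fun x hx => hXsub hx
  -- closure: successor
  have hsucc : ∀ x ∈ X, x + 1 ∈ X := by
    intro x hx
    have hsub : ↑({x} : Finset Ordinal) ⊆ X := by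
      intro y hy
      simp only [Finset.coe_singleton, Set.mem_singleton_iff] at hy
      rwa [hy]
    have h := hCl {x} hsub
    rw [Ffun_singleton, if_pos] at h
    · exact h
    · rw [Ordinal.add_one_eq_succ]
      exact hLinfLim.succ_lt (hXlt x hx)
  -- closure: predecessor
  have hpred : ∀ γ ∈ X, Ordinal.pred γ ∈ X := by
    intro γ hγ
    have hsub : ↑({γ, γ + 1} : Finset Ordinal) ⊆ X := by
      intro y hy
      simp only [Finset.coe_insert, Finset.coe_singleton, Set.mem_insert_iff,
        Set.mem_singleton_iff] at hy
      rcases hy with rfl | rfl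
      · exact hγ
      · exact hsucc γ hγ
    have h := hCl {γ, γ + 1} hsub
    rw [Ffun_pair_adj, if_pos ((Ordinal.pred_le_self γ).trans_lt (hXlt γ hγ))] at h
    exact h
  -- closure: j
  have hjmem : ∀ c ∈ X, ∀ a ∈ X, a + 1 < c → j c a ∈ X := by
    intro c hc a ha hlt
    have hac : a < c := lt_trans (hlto a) hlt
    have hsub : ↑({a, c} : Finset Ordinal) ⊆ X := by
      intro y hy
      simp only [Finset.coe_insert, Finset.coe_singleton, Set.mem_insert_iff,
        Set.mem_singleton_iff] at hy
      rcases hy with rfl | rfl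
      · exact ha
      · exact hc
    have h := hCl {a, c} hsub
    rw [Ffun_pair hac (ne_of_gt hlt)] at h
    exact h
  -- closure: u
  have hu : ∀ γ ∈ X, γ < L → Order.IsSuccLimit γ → ∀ ξ ∈ X, ξ < γ → sInf (C γ ∩ Set.Ici ξ) ∈ X := by
    intro γ hγ hγL hγlim ξ hξ hξγ
    have h12 : (ξ + 1) + 1 = ξ + 2 := by rw [add_assoc]; norm_num
    have hξ1 : ξ + 1 ∈ X := hsucc ξ hξ
    have hξ2 : ξ + 2 ∈ X := by rw [← h12]; exact hsucc _ hξ1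
    have hξ1γ : ξ + 1 < γ := by
      rw [Ordinal.add_one_eq_succ]; exact hγlim.succ_lt hξγ
    have hξ2γ : ξ + 2 < γ := by
      rw [← h12, Ordinal.add_one_eq_succ]; exact hγlim.succ_lt hξ1γ
    have hsub : ↑({ξ, ξ + 1, ξ + 2, γ} : Finset Ordinal) ⊆ X := by
      intro y hy
      simp only [Finset.coe_insert, Finset.coe_singleton, Set.mem_insert_iff,
        Set.mem_singleton_iff] at hy
      rcases hy with rfl | rfl | rfl | rfl
      exacts [hξ, hξ1, hξ2, hγ]
    have h := hCl {ξ, ξ + 1, ξ + 2, γ} hsub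
    rw [Ffun_quad hξ2γ] at h
    obtain ⟨hCclub, _, _⟩ := hC' γ hγL hγlim
    obtain ⟨c, hcC, hξc⟩ := hCclub.2.1 ξ hξγ
    have hr : sInf (C γ ∩ Set.Ici ξ) < L :=
      lt_trans (lt_of_le_of_lt (csInf_le (OrderBot.bddBelow _)
        (show c ∈ C γ ∩ Set.Ici ξ from ⟨hcC, hξc⟩)) (hCclub.1 hcC)) hγL
    rw [if_pos hr] at h
    exact h
  -- closure: m
  have hm : ∀ γ ∈ X, γ < L → Order.IsSuccLimit γ → ∀ ξ ∈ X, ξ < γ →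
      otp (C γ ∩ Set.Iio ξ) < Ordinal.lift.{1} K →
      ∃ z ∈ X, z < K ∧ Ordinal.lift.{1} z = otp (C γ ∩ Set.Iio ξ) := by
    intro γ hγ hγL hγlim ξ hξ hξγ hguard
    obtain ⟨o₀, ho₀⟩ := Ordinal.mem_range_lift_of_le hguard.le
    have hsetone : {o : Ordinal.{0} | Ordinal.lift.{1} o = otp (C γ ∩ Set.Iio ξ)} = {o₀} := by
      ext o
      simp only [Set.mem_setOf_eq, Set.mem_singleton_iff]
      constructor
      · intro h
        exact Ordinal.lift_inj.mp (h.trans ho₀.symm)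
      · rintro rfl
        exact ho₀
    have ho₀K : o₀ < K := by
      rw [← Ordinal.lift_lt.{1}, ho₀]
      exact hguard
    have hξ1 : ξ + 1 ∈ X := hsucc ξ hξ
    have hξ1γ : ξ + 1 < γ := by
      rw [Ordinal.add_one_eq_succ]; exact hγlim.succ_lt hξγ
    have hsub : ↑({ξ, ξ + 1, γ} : Finset Ordinal) ⊆ X := by
      intro y hy
      simp only [Finset.coe_insert, Finset.coe_singleton, Set.mem_insert_iff,
        Set.mem_singleton_iff] at hy
      rcases hy with rfl | rfl | rfl
      exacts [hξ, hξ1, hγ]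
    have h := hCl {ξ, ξ + 1, γ} hsub
    rw [Ffun_triple hξ1γ, hsetone, csInf_singleton, if_pos ho₀K] at h
    exact ⟨o₀, h, ho₀K, ho₀⟩
  -- cardinal bookkeeping
  have hZeq : #(X ∩ Set.Iio K : Set Ordinal) = Cardinal.lift.{1} (Cardinal.aleph.{0} ((n : Ordinal.{0}) + 1)) := by
    rw [hKdef, hκc]
    exact hChang n
  set μ : Cardinal.{1} := Cardinal.lift.{1} (Cardinal.aleph.{0} ((n : Ordinal.{0}) + 1)) with hμdef
  set ν : Cardinal.{1} := Cardinal.lift.{1} (Cardinal.aleph.{0} (((n + 1 : ℕ) : Ordinal.{0}) + 1)) with hνdef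
  have hidx : Ordinal.omega0 + (((n + 1 : ℕ) : Ordinal.{0}) + 1)
      = (Ordinal.omega0 + ((n : Ordinal.{0}) + 1)) + 1 := by
    simp only [Nat.cast_add, Nat.cast_one, add_assoc]
  have hSeq : #(X ∩ Set.Iio L : Set Ordinal) = ν := by
    have := hChang (n + 1)
    rw [hidx] at this
    rw [hLdef, hsucceq]
    exact this
  have hμ : ℵ₀ ≤ μ := by
    rw [hμdef]
    exact Cardinal.aleph0_le_lift.mpr (Cardinal.aleph0_le_aleph _)
  have hμν : μ < ν := by
    rw [hμdef, hνdef]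
    apply Cardinal.lift_lt.mpr
    apply Cardinal.aleph_lt_aleph.mpr
    push_cast
    exact hlto _
  -- hbound
  have hbound : ∀ β ∈ X, β < L → #(X ∩ Set.Iio β : Set Ordinal) ≤ μ := by
    intro β hβ hβL
    have hinj : Function.Injective (fun x : ↥(X ∩ Set.Iio β) =>
        (if h : x.1 + 1 = β then Sum.inr PUnit.unit else
          Sum.inl ⟨j β x.1, hjmem β hβ x.1 x.2.1
              (lt_of_le_of_ne (by rw [Ordinal.add_one_eq_succ]; exact Order.succ_le_of_lt x.2.2) h),
            hj1 β x.1⟩ : ↥(X ∩ Set.Iio K) ⊕ PUnit.{2})) := by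
      intro x y hxy
      dsimp only at hxy
      by_cases hx : x.1 + 1 = β <;> by_cases hy : y.1 + 1 = β
      · apply Subtype.ext
        have : x.1 + 1 = y.1 + 1 := by rw [hx, hy]
        rw [Ordinal.add_one_eq_succ, Ordinal.add_one_eq_succ] at this
        exact Order.succ_eq_succ_iff_of_not_isMax (not_isMax _) (not_isMax _) |>.mp this
      · rw [dif_pos hx, dif_neg hy] at hxy
        exact absurd hxy (by simp)
      · rw [dif_neg hx, dif_pos hy] at hxy
        exact absurd hxy (by simp)
      · rw [dif_neg hx, dif_neg hy] at hxy
        have hval : j β x.1 = j β y.1 := congrArg Subtype.val (Sum.inl_injective hxy)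
        exact Subtype.ext (hj2 β hβL x.2.2 y.2.2 hval)
    have h1 : #(X ∩ Set.Iio β : Set Ordinal) ≤ #(↥(X ∩ Set.Iio K) ⊕ PUnit.{2}) :=
      Cardinal.mk_le_of_injective hinj
    have h2 : #(↥(X ∩ Set.Iio K) ⊕ PUnit.{2}) = μ + 1 := by
      rw [Cardinal.mk_sum, Cardinal.lift_id, Cardinal.lift_id, Cardinal.mk_punit, hZeq]
    rw [h2, Cardinal.add_one_eq hμ] at h1
    exact h1
  -- remaining cardinal hypotheses
  set ρ : Cardinal.{1} := Cardinal.lift.{1} κc with hρdef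
  have hxρ : ∀ x < L, #(Set.Iio x : Set Ordinal) ≤ ρ := by
    intro x hx
    rw [Ordinal.mk_Iio_ordinal, hρdef]
    exact Cardinal.lift_le.mpr (Order.lt_succ_iff.mp (Cardinal.lt_ord.mp (hLdef ▸ hx)))
  have haleq : Cardinal.aleph.{0} (((n + 1 : ℕ) : Ordinal.{0}) + 1) ≤ κc := by
    rw [hκc]
    apply Cardinal.aleph_le_aleph.mpr
    have h2 : ((n + 1 : ℕ) : Ordinal.{0}) + 1 = ((n + 2 : ℕ) : Ordinal.{0}) := by
      push_cast
      rw [add_assoc]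
      norm_num
    rw [h2]
    exact (Ordinal.nat_lt_omega0 _).le.trans le_self_add
  have hLρ : ν * ρ < #(Set.Iio L : Set Ordinal) := by
    rw [Ordinal.mk_Iio_ordinal, hLdef, Cardinal.card_ord, hνdef, hρdef, ← Cardinal.lift_mul]
    apply Cardinal.lift_lt.mpr
    rw [Cardinal.mul_eq_max (Cardinal.aleph0_le_aleph _) (Cardinal.aleph0_le_aleph _),
      max_eq_right haleq]
    exact Order.lt_succ_of_not_isMax (not_isMax κc)
  exact main C X K L μ ν ρ hμ hμν hLlim hC' hSeq hsucc hpred hbound hZeq.le hu hm hxρ hLρ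


end Paper
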